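/- arXiv:1705.00369 — 2 statements merged into one kernel-verified Lean document; each statement's English description precedes it below -/
import Mathlib

section
/- For fixed r ∈ ℝ and t ∈ [0,1), the function v_r(t,·) defined by v_r(t,z) = r + √(2π(1-t))(1-β²) exp((z-r)²/(2(1-t))) Φ((z-r)/√(1-t)) for z < r + β√(1-t), and v_r(t,z) = z for z ≥ r + β√(1-t), is continuous on ℝ, and moreover v_r(t,z) ≥ z for all z ∈ ℝ. -/
open Real Set

/-- The standard normal cumulative distribution function. -/
noncomputable def Phi (x : ℝ) : ℝ :=
  (Real.sqrt (2 * Real.pi))⁻¹ * ∫ u in Set.Iic x, Real.exp (-u ^ 2 / 2)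

/-- The value function for optimally stopping a Brownian bridge with known pinning point `r`. -/
noncomputable def vr (β r t z : ℝ) : ℝ :=
  if z < r + β * Real.sqrt (1 - t) then
    r + Real.sqrt (2 * Real.pi * (1 - t)) * (1 - β ^ 2) *
      Real.exp ((z - r) ^ 2 / (2 * (1 - t))) * Phi ((z - r) / Real.sqrt (1 - t))
  else z

/-!
In the variable `x = (z - r) / √(1 - t)` the continuation branch of `vr` is `r + √(1 - t) g(x)` with
`g(x) = √(2π)(1 - β²) e^{x²/2} Φ(x)`, and the equation defining `β` says `g(β) = β`, which is
continuity at the free boundary. Since `Φ' = φ`, `g` solves `g' = x g + (1 - β²)`. The root equation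
forces `β² < 1`, so `g > 0` and `g` increases on `[0, ∞)`; hence `(g - id)' = x g - β² ≤ 0` on
`(-∞, β]` (for `0 < x ≤ β` use `g(x) ≤ g(β) = β`), and `g(x) - x ≥ g(β) - β = 0` there.
-/

section Gaussian

open MeasureTheory

lemma integrable_exp_neg_sq_div_two : Integrable fun u : ℝ => exp (-u ^ 2 / 2) := by
  convert integrable_exp_neg_mul_sq (by norm_num : (0 : ℝ) < 1 / 2) using 2 with u
  ring_nf

lemma Phi_eq_add_intervalIntegral (x : ℝ) :
    Phi x = (√(2 * π))⁻¹ *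
      ((∫ u in Iic 0, exp (-u ^ 2 / 2)) + ∫ u in (0 : ℝ)..x, exp (-u ^ 2 / 2)) := by
  rw [Phi, ← intervalIntegral.integral_Iic_sub_Iic integrable_exp_neg_sq_div_two.integrableOn
    integrable_exp_neg_sq_div_two.integrableOn]
  ring

lemma hasDerivAt_Phi (x : ℝ) : HasDerivAt Phi ((√(2 * π))⁻¹ * exp (-x ^ 2 / 2)) x := by
  have hcont : Continuous fun u : ℝ => exp (-u ^ 2 / 2) := by fun_prop
  rw [funext Phi_eq_add_intervalIntegral]
  exact (((hcont.integral_hasStrictDerivAt 0 x).hasDerivAt).const_add _).const_mul _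

lemma Phi_pos (x : ℝ) : 0 < Phi x := by
  refine mul_pos (by positivity) ?_
  rw [setIntegral_pos_iff_support_of_nonneg_ae (.of_forall fun u => (exp_pos _).le)
    integrable_exp_neg_sq_div_two.integrableOn]
  simp [Function.support, exp_ne_zero]

end Gaussian

noncomputable def vrProfile (β x : ℝ) : ℝ :=
  √(2 * π) * (1 - β ^ 2) * exp (x ^ 2 / 2) * Phi x

section Profile

variable {β : ℝ}

lemma hasDerivAt_vrProfile (β x : ℝ) :
    HasDerivAt (vrProfile β) (x * vrProfile β x + (1 - β ^ 2)) x := by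
  have hexp : HasDerivAt (fun y : ℝ => exp (y ^ 2 / 2)) (exp (x ^ 2 / 2) * x) x := by
    simpa using ((hasDerivAt_pow 2 x).div_const 2).exp
  have h := (hexp.mul (hasDerivAt_Phi x)).const_mul (√(2 * π) * (1 - β ^ 2))
  have hinv : √(2 * π) * (√(2 * π))⁻¹ = 1 := mul_inv_cancel₀ (by positivity)
  have hexp_mul : exp (x ^ 2 / 2) * exp (-x ^ 2 / 2) = 1 := by
    rw [← exp_add]; ring_nf; exact exp_zero
  refine (h.congr_deriv ?_).congr_of_eventuallyEq (.of_forall fun y => ?_)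
  · simp only [vrProfile]
    linear_combination (1 - β ^ 2) * (√(2 * π) * (√(2 * π))⁻¹) * hexp_mul + (1 - β ^ 2) * hinv
  · simp only [vrProfile, Pi.mul_apply]; ring

lemma vrProfile_pos (hβ : β ^ 2 < 1) (x : ℝ) : 0 < vrProfile β x := by
  have : 0 < 1 - β ^ 2 := by linarith
  unfold vrProfile
  have := Phi_pos x
  positivity

lemma sq_lt_one_of_vrProfile_self (hβ : 0 < β) (hroot : vrProfile β β = β) : β ^ 2 < 1 := by
  by_contra! hβ1
  have hnonpos : vrProfile β β ≤ 0 :=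
    mul_nonpos_of_nonpos_of_nonneg
      (mul_nonpos_of_nonpos_of_nonneg
        (mul_nonpos_of_nonneg_of_nonpos (by positivity) (by linarith)) (exp_pos _).le)
      (Phi_pos β).le
  linarith

lemma monotoneOn_vrProfile (hβ : β ^ 2 < 1) : MonotoneOn (vrProfile β) (Ici 0) := by
  refine monotoneOn_of_hasDerivWithinAt_nonneg (convex_Ici 0)
    (fun x _ => (hasDerivAt_vrProfile β x).continuousAt.continuousWithinAt)
    (fun x _ => (hasDerivAt_vrProfile β x).hasDerivWithinAt) fun x hx => ?_
  rw [interior_Ici] at hx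
  have := vrProfile_pos hβ x
  nlinarith [mem_Ioi.1 hx]

lemma le_vrProfile (hβ : 0 < β) (hroot : vrProfile β β = β) {x : ℝ} (hx : x ≤ β) :
    x ≤ vrProfile β x := by
  have hβ1 := sq_lt_one_of_vrProfile_self hβ hroot
  have hderiv (y : ℝ) : HasDerivAt (fun y => vrProfile β y - y) (y * vrProfile β y - β ^ 2) y :=
    ((hasDerivAt_vrProfile β y).sub (hasDerivAt_id y)).congr_deriv (by ring)
  have hanti : AntitoneOn (fun y => vrProfile β y - y) (Iic β) := by
    refine antitoneOn_of_hasDerivWithinAt_nonpos (convex_Iic β)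
      (fun y _ => (hderiv y).continuousAt.continuousWithinAt)
      (fun y _ => (hderiv y).hasDerivWithinAt) fun y hy => ?_
    rw [interior_Iic] at hy
    have hpos := vrProfile_pos hβ1 y
    rcases le_or_gt y 0 with hy0 | hy0
    · nlinarith
    · have hle : vrProfile β y ≤ β :=
        (monotoneOn_vrProfile hβ1 hy0.le hβ.le (mem_Iio.1 hy).le).trans_eq hroot
      nlinarith [mem_Iio.1 hy]
  have := hanti hx self_mem_Iic hx
  simp only [hroot, sub_self] at this
  linarith

end Profile

section ValueFunction

variable {β r t : ℝ}

lemma vr_eq_ite_vrProfile (ht : t < 1) (z : ℝ) :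
    vr β r t z = if z < r + β * √(1 - t) then r + √(1 - t) * vrProfile β ((z - r) / √(1 - t))
      else z := by
  have hs : 0 < √(1 - t) := sqrt_pos.2 (by linarith)
  have hs2 : √(1 - t) ^ 2 = 1 - t := sq_sqrt (by linarith)
  have hsqrt : √(2 * π * (1 - t)) = √(2 * π) * √(1 - t) := sqrt_mul (by positivity) _
  have hexp : (z - r) ^ 2 / (2 * (1 - t)) = ((z - r) / √(1 - t)) ^ 2 / 2 := by
    rw [div_pow, hs2, div_div, mul_comm]
  rw [vr, vrProfile, hsqrt, hexp]
  congr 1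
  ring

lemma continuous_vr (hroot : vrProfile β β = β) (ht : t < 1) : Continuous (vr β r t) := by
  have hs : 0 < √(1 - t) := sqrt_pos.2 (by linarith)
  have hcont : Continuous (vrProfile β) :=
    continuous_iff_continuousAt.2 fun x => (hasDerivAt_vrProfile β x).continuousAt
  simp only [funext (vr_eq_ite_vrProfile (β := β) (r := r) ht), ← not_le, ite_not]
  refine Continuous.if_le continuous_id (by fun_prop) continuous_const continuous_id
    fun z hz => ?_
  rw [← hz, add_sub_cancel_left, mul_div_cancel_right₀ _ hs.ne', hroot]
  ring

lemma le_vr (hβ : 0 < β) (hroot : vrProfile β β = β) (ht : t < 1) (z : ℝ) :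
    z ≤ vr β r t z := by
  have hs : 0 < √(1 - t) := sqrt_pos.2 (by linarith)
  rw [vr_eq_ite_vrProfile ht]
  split_ifs with hz
  · have hx : (z - r) / √(1 - t) ≤ β := by
      rw [div_le_iff₀ hs]; linarith
    have := mul_le_mul_of_nonneg_left (le_vrProfile hβ hroot hx) hs.le
    rw [mul_div_cancel₀ _ hs.ne'] at this
    linarith
  · exact le_rfl

end ValueFunction

theorem stmt2 (β r t : ℝ) (hβ : 0 < β)
    (hroot : Real.sqrt (2 * Real.pi) * (1 - β ^ 2) * Real.exp (β ^ 2 / 2) * Phi β = β)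
    (ht : t ∈ Set.Ico (0 : ℝ) 1) :
    Continuous (fun z => vr β r t z) ∧ ∀ z : ℝ, z ≤ vr β r t z :=
  ⟨continuous_vr hroot ht.2, le_vr hβ hroot ht.2⟩
end

section
/- For fixed r and t ∈ [0,1), the function u(z) = r + √(2π(1-t))(1-β²) exp((z-r)²/(2(1-t))) Φ((z-r)/√(1-t)) satisfies the PDE relation ∂_t u + ((r - z)/(1-t)) ∂_z u + (1/2) ∂²_z u = 0 for all z ∈ ℝ. -/
open Real Set

/-- The smooth part of the value function for a Brownian bridge pinning at `r`. -/
noncomputable def F (r β t z : ℝ) : ℝ :=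
  r + Real.sqrt (2 * Real.pi * (1 - t)) * (1 - β ^ 2) *
    Real.exp ((z - r) ^ 2 / (2 * (1 - t))) * Phi ((z - r) / Real.sqrt (1 - t))

open MeasureTheory in
theorem hasDerivAt_integral_Iic {E : Type*} [NormedAddCommGroup E] [NormedSpace ℝ E]
    [CompleteSpace E] {f : ℝ → E} (hf : Integrable f) {x : ℝ} (hcont : ContinuousAt f x) :
    HasDerivAt (fun y => ∫ u in Iic y, f u) (f x) x := by
  have hsplit :
      (fun y => ∫ u in Iic y, f u) = fun y => (∫ u in Iic 0, f u) + ∫ u in 0..y, f u := by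
    funext y
    rw [← intervalIntegral.integral_Iic_sub_Iic hf.integrableOn hf.integrableOn]
    abel
  rw [hsplit]
  exact (intervalIntegral.integral_hasDerivAt_right hf.intervalIntegrable
    hf.aestronglyMeasurable.stronglyMeasurableAtFilter hcont).const_add _

noncomputable def phi (x : ℝ) : ℝ :=
  (Real.sqrt (2 * Real.pi))⁻¹ * Real.exp (-x ^ 2 / 2)

theorem phi_pos (x : ℝ) : 0 < phi x := by
  unfold phi; positivity

theorem hasDerivAt_phi (x : ℝ) : HasDerivAt phi (-x * phi x) x := by
  refine ((((hasDerivAt_pow 2 x).neg.div_const 2).exp).const_mul _).congr_deriv ?_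
  simp only [phi, Pi.neg_apply]; ring

theorem hasDerivAt_Phi_s18 (x : ℝ) : HasDerivAt Phi (phi x) x := by
  have hint : MeasureTheory.Integrable fun u : ℝ => Real.exp (-u ^ 2 / 2) := by
    simpa [neg_div, div_eq_inv_mul] using integrable_exp_neg_mul_sq (b := 1 / 2) (by norm_num)
  exact (hasDerivAt_integral_Iic hint (by fun_prop)).const_mul _

/-- `Φ / φ`, i.e. the Mills ratio of the standard normal evaluated at `-x`. -/
noncomputable def millsRatio (x : ℝ) : ℝ := Phi x / phi x

theorem hasDerivAt_millsRatio (x : ℝ) :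
    HasDerivAt millsRatio (1 + x * millsRatio x) x := by
  refine ((hasDerivAt_Phi_s18 x).div (hasDerivAt_phi x) (phi_pos x).ne').congr_deriv ?_
  have := (phi_pos x).ne'
  unfold millsRatio
  field_simp
  ring

theorem phi_div_sqrt {c : ℝ} (hc : 0 < c) (y : ℝ) :
    phi (y / Real.sqrt c) = (Real.sqrt (2 * Real.pi) * Real.exp (y ^ 2 / (2 * c)))⁻¹ := by
  rw [phi, mul_inv, div_pow, Real.sq_sqrt hc.le, ← Real.exp_neg]
  congr 2
  ring

noncomputable def scaledMillsRatio (c y : ℝ) : ℝ := Real.sqrt c * millsRatio (y / Real.sqrt c)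

-- Also for `t ≥ 1`, where both square roots are `0`, so it is an identity of functions of `t`.
theorem F_eq_scaledMillsRatio (r β t z : ℝ) :
    F r β t z = r + (1 - β ^ 2) * scaledMillsRatio (1 - t) (z - r) := by
  rcases le_or_gt (1 - t) 0 with hc | hc
  · have h2pi : 2 * Real.pi * (1 - t) ≤ 0 := mul_nonpos_of_nonneg_of_nonpos (by positivity) hc
    simp [F, scaledMillsRatio, Real.sqrt_eq_zero'.2 hc, Real.sqrt_eq_zero'.2 h2pi]
  · rw [F, scaledMillsRatio, millsRatio, phi_div_sqrt hc, Real.sqrt_mul (by positivity)]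
    field_simp

section scaledMillsRatio

variable {c : ℝ} (hc : 0 < c) (y : ℝ)
include hc

theorem hasDerivAt_scaledMillsRatio_right :
    HasDerivAt (scaledMillsRatio c) (1 + y / c * scaledMillsRatio c y) y := by
  refine (((hasDerivAt_millsRatio _).comp y ((hasDerivAt_id y).div_const √c)).const_mul
    √c).congr_deriv ?_
  obtain ⟨s, hs, rfl⟩ : ∃ s, 0 < s ∧ c = s ^ 2 :=
    ⟨√c, Real.sqrt_pos.2 hc, (Real.sq_sqrt hc.le).symm⟩
  simp only [scaledMillsRatio, id, Real.sqrt_sq hs.le]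
  field_simp

theorem hasDerivAt_scaledMillsRatio_left :
    HasDerivAt (fun c => scaledMillsRatio c y)
      (scaledMillsRatio c y * (1 / (2 * c) - y ^ 2 / (2 * c ^ 2)) - y / (2 * c)) c := by
  have hsqrt := Real.hasDerivAt_sqrt hc.ne'
  refine (hsqrt.mul ((hasDerivAt_millsRatio _).comp c
    ((hasDerivAt_const c y).div hsqrt (Real.sqrt_pos.2 hc).ne'))).congr_deriv ?_
  obtain ⟨s, hs, rfl⟩ : ∃ s, 0 < s ∧ c = s ^ 2 :=
    ⟨√c, Real.sqrt_pos.2 hc, (Real.sq_sqrt hc.le).symm⟩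
  simp only [scaledMillsRatio, Function.comp_def, Pi.div_apply, Real.sqrt_sq hs.le]
  field_simp
  ring

theorem deriv_deriv_scaledMillsRatio_right :
    deriv (deriv (scaledMillsRatio c)) y =
      1 / c * scaledMillsRatio c y + y / c * (1 + y / c * scaledMillsRatio c y) := by
  have hderiv : deriv (scaledMillsRatio c) = fun y => 1 + y / c * scaledMillsRatio c y :=
    funext fun y => (hasDerivAt_scaledMillsRatio_right hc y).deriv
  rw [hderiv]
  exact ((((hasDerivAt_id y).div_const c).mul
    (hasDerivAt_scaledMillsRatio_right hc y)).const_add 1).deriv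

theorem scaledMillsRatio_pde :
    -deriv (fun c => scaledMillsRatio c y) c - y / c * deriv (scaledMillsRatio c) y +
      1 / 2 * deriv (deriv (scaledMillsRatio c)) y = 0 := by
  rw [(hasDerivAt_scaledMillsRatio_left hc y).deriv, (hasDerivAt_scaledMillsRatio_right hc y).deriv,
    deriv_deriv_scaledMillsRatio_right hc y]
  field_simp
  ring

end scaledMillsRatio

section F

variable (r β : ℝ)

theorem deriv_F_time (t z : ℝ) :
    deriv (fun s => F r β s z) t =
      -((1 - β ^ 2) * deriv (fun c => scaledMillsRatio c (z - r)) (1 - t)) := by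
  simp only [F_eq_scaledMillsRatio, deriv_const_add', deriv_const_mul_field',
    deriv_comp_const_sub (fun c => scaledMillsRatio c (z - r)), mul_neg]

theorem deriv_F_space (t : ℝ) :
    deriv (F r β t) = fun z => (1 - β ^ 2) * deriv (scaledMillsRatio (1 - t)) (z - r) := by
  funext z
  change deriv (fun z => F r β t z) z = _
  simp only [F_eq_scaledMillsRatio, deriv_const_add', deriv_const_mul_field',
    deriv_comp_sub_const (scaledMillsRatio (1 - t))]

theorem deriv_deriv_F_space (t z : ℝ) :
    deriv (deriv (F r β t)) z =
      (1 - β ^ 2) * deriv (deriv (scaledMillsRatio (1 - t))) (z - r) := by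
  simp only [deriv_F_space, deriv_const_mul_field',
    deriv_comp_sub_const (deriv (scaledMillsRatio (1 - t)))]

end F

theorem stmt18 (r β : ℝ) :
    ∀ t ∈ Set.Ico (0 : ℝ) 1, ∀ z : ℝ,
      deriv (fun s => F r β s z) t + ((r - z) / (1 - t)) * deriv (fun y => F r β t y) z +
        (1 / 2) * deriv (deriv (fun y => F r β t y)) z = 0 := by
  intro t ht z
  have hc : 0 < 1 - t := sub_pos.2 ht.2
  rw [deriv_F_time, deriv_deriv_F_space, deriv_F_space]
  linear_combination (1 - β ^ 2) * scaledMillsRatio_pde hc (z - r)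
end
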